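/- There is an absolute constant c > 0 such that for all sufficiently large n, the four-color Ramsey number satisfies r_3(n; 4) > 2^{2^{cn}}. -/

import Mathlib

open Filter

/-- A monochromatic clique of size `n` in color `c` for a `q`-coloring of `k`-subsets. -/
def monoCliqueC (k : ℕ) {N q : ℕ} (χ : Finset (Fin N) → Fin q) (c : Fin q) (n : ℕ) : Prop :=
  ∃ S : Finset (Fin N), S.card = n ∧ ∀ e : Finset (Fin N), e ⊆ S → e.card = k → χ e = c

/-- The multicolor Ramsey number `r_k(n; q)`. -/
noncomputable def ramseyMulti (k n q : ℕ) : ℕ :=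
  sInf {N | ∀ χ : Finset (Fin N) → Fin q, ∃ c : Fin q, monoCliqueC k χ c n}

/-!
Finiteness of `ramseyMulti` is Ramsey's theorem, proved for every uniformity by the Erdős–Rado
argument: a large set contains a large end-homogeneous subset, on which the colour of a `k + 1`-set
only depends on its `k` smallest elements, and Ramsey's theorem for `k` finishes.

For the lower bound, Erdős's counting argument gives a 2-colouring of the pairs of `Fin (2 ^ m)`
with no monochromatic set of size `2m + 2`, and the Erdős–Hajnal stepping-up lemma lifts it to a
4-colouring of the triples of `Fin (2 ^ 2 ^ m)`. Let `δ(x, y)` be the highest bit in which `x` and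
`y` differ; for `x < y < z` one has `δ(x, y) ≠ δ(y, z)` and `δ(x, z) = max (δ(x, y), δ(y, z))`.
The triple gets the colour of the pair `{δ(x, y), δ(y, z)}` together with the bit
`δ(x, y) < δ(y, z)`. In a monochromatic set `S` this bit is constant; if it is true, the values
`δ(min S, y)` for `y ∈ S \ {min S}` are distinct and pairwise coloured like the triples, hence
form a monochromatic set of size `|S| - 1`, and if it is false the same holds with `δ(y, max S)`.
-/

open Finset

section Ramsey

universe u

variable {α C : Type*} [LinearOrder α]

def IsEndHomogeneous (k : ℕ) (χ : Finset α → C) (J : Finset α) : Prop :=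
  ∀ f ⊆ J, #f = k → ∀ z ∈ J, ∀ z' ∈ J, (∀ a ∈ f, a < z) → (∀ a ∈ f, a < z') →
    χ (insert z f) = χ (insert z' f)

lemma IsEndHomogeneous.mono {k : ℕ} {χ : Finset α → C} {J B : Finset α}
    (h : IsEndHomogeneous k χ B) (hJB : J ⊆ B) : IsEndHomogeneous k χ J :=
  fun f hf hk z hz z' hz' => h f (hf.trans hJB) hk z (hJB hz) z' (hJB hz')

lemma IsEndHomogeneous.insert_of_lt {k : ℕ} {χ : Finset α → C} {J : Finset α} {x : α}
    (hx : ∀ y ∈ J, x < y) (hJ : IsEndHomogeneous (k + 1) χ J)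
    (hxJ : IsEndHomogeneous k (fun g => χ (insert x g)) J) :
    IsEndHomogeneous (k + 1) χ (insert x J) := by
  intro f hf hk z hz z' hz' hfz hfz'
  by_cases hxf : x ∈ f
  · have hzJ : z ∈ J := (mem_insert.1 hz).resolve_left (hfz x hxf).ne'
    have hz'J : z' ∈ J := (mem_insert.1 hz').resolve_left (hfz' x hxf).ne'
    have hfJ : f.erase x ⊆ J := fun a ha =>
      (mem_insert.1 (hf (mem_of_mem_erase ha))).resolve_left (ne_of_mem_erase ha)
    have : χ (insert x (insert z (f.erase x))) = χ (insert x (insert z' (f.erase x))) :=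
      hxJ (f.erase x) hfJ (by rw [card_erase_of_mem hxf, hk, Nat.add_sub_cancel]) z hzJ z' hz'J
        (fun a ha => hfz a (mem_of_mem_erase ha)) (fun a ha => hfz' a (mem_of_mem_erase ha))
    rwa [insert_comm x z, insert_erase hxf, insert_comm x z', insert_erase hxf] at this
  · have hfJ : f ⊆ J := (subset_insert_iff_of_notMem hxf).1 hf
    obtain ⟨a, ha⟩ : f.Nonempty := card_pos.1 (by omega)
    have hzJ : z ∈ J :=
      (mem_insert.1 hz).resolve_left fun h => (hx a (hfJ ha)).not_gt (h ▸ hfz a ha)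
    have hz'J : z' ∈ J :=
      (mem_insert.1 hz').resolve_left fun h => (hx a (hfJ ha)).not_gt (h ▸ hfz' a ha)
    exact hJ f hfJ hk z hzJ z' hz'J hfz hfz'

theorem exists_isEndHomogeneous [Fintype C] (k s : ℕ) :
    ∃ N : ℕ, ∀ {β : Type u} [LinearOrder β] (A : Finset β) (χ : Finset β → C), N ≤ #A →
      ∃ J ⊆ A, #J = s ∧ IsEndHomogeneous k χ J := by
  induction k generalizing s with
  | zero =>
    refine ⟨Fintype.card C * s, fun A χ hA => ?_⟩
    classical
    have : Nonempty C := ⟨χ ∅⟩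
    obtain ⟨c, -, hc⟩ := exists_le_card_fiber_of_mul_le_card_of_maps_to
      (f := fun a => χ {a}) (fun a _ => mem_univ _) univ_nonempty (by simpa using hA)
    obtain ⟨J, hJc, hJ⟩ := exists_subset_card_eq hc
    refine ⟨J, hJc.trans (filter_subset _ _), hJ, fun f _ hf z hz z' hz' _ _ => ?_⟩
    rw [card_eq_zero.1 hf]
    exact (mem_filter.1 (hJc hz)).2.trans (mem_filter.1 (hJc hz')).2.symm
  | succ k ih =>
    induction s with
    | zero => exact ⟨0, fun A _ _ => ⟨∅, empty_subset _, rfl, by simp [IsEndHomogeneous]⟩⟩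
    | succ s ihs =>
      obtain ⟨N, hN⟩ := ihs
      obtain ⟨N₀, hN₀⟩ := ih N
      refine ⟨N₀ + 1, fun A χ hA => ?_⟩
      have hA₀ : A.Nonempty := card_pos.1 (by omega)
      set x := A.min' hA₀
      obtain ⟨B, hBA, hB, hBx⟩ := hN₀ (A.erase x) (fun g => χ (insert x g))
        (by rw [card_erase_of_mem (min'_mem A hA₀)]; omega)
      obtain ⟨J, hJB, hJ, hJhom⟩ := hN B χ hB.ge
      have hxJ : ∀ y ∈ J, x < y := fun y hy => min'_lt_of_mem_erase_min' _ _ (hBA (hJB hy))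
      refine ⟨insert x J, insert_subset (min'_mem A hA₀) (hJB.trans (hBA.trans (erase_subset _ _))),
        by rw [card_insert_of_notMem fun h => (hxJ x h).false, hJ],
        hJhom.insert_of_lt hxJ (hBx.mono hJB)⟩

theorem hypergraph_ramsey [Fintype C] (k n : ℕ) :
    ∃ N : ℕ, ∀ {β : Type u} [LinearOrder β] (A : Finset β) (χ : Finset β → C), N ≤ #A →
      ∃ J ⊆ A, #J = n ∧ ∃ c, ∀ e ⊆ J, #e = k → χ e = c := by
  induction k generalizing n with
  | zero =>
    refine ⟨n, fun A χ hA => ?_⟩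
    obtain ⟨J, hJA, hJ⟩ := exists_subset_card_eq hA
    exact ⟨J, hJA, hJ, χ ∅, fun e _ he => by rw [card_eq_zero.1 he]⟩
  | succ k ih =>
    obtain ⟨N, hN⟩ := ih n
    obtain ⟨N₀, hN₀⟩ := exists_isEndHomogeneous (C := C) k (N + 1)
    refine ⟨N₀, fun A χ hA => ?_⟩
    obtain ⟨J, hJA, hJ, hJhom⟩ := hN₀ A χ hA
    have hJ₀ : J.Nonempty := card_pos.1 (by omega)
    set m := J.max' hJ₀
    obtain ⟨I, hIJ, hI, c, hc⟩ := hN (J.erase m) (fun g => χ (insert m g))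
      (by rw [card_erase_of_mem (max'_mem J hJ₀)]; omega)
    have hIJ' : I ⊆ J := hIJ.trans (erase_subset _ _)
    refine ⟨I, hIJ'.trans hJA, hI, c, fun e heI he => ?_⟩
    have he₀ : e.Nonempty := card_pos.1 (by omega)
    set z := e.max' he₀
    have hf : e.erase z ⊆ I := (erase_subset _ _).trans heI
    have hfk : #(e.erase z) = k := by
      rw [card_erase_of_mem (max'_mem e he₀), he, Nat.add_sub_cancel]
    rw [← insert_erase (max'_mem e he₀), hJhom _ (hf.trans hIJ') hfk z (hIJ' (heI (max'_mem e he₀)))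
      m (max'_mem J hJ₀) (fun a ha => lt_max'_of_mem_erase_max' _ _ ha)
      (fun a ha => lt_max'_of_mem_erase_max' _ _ (hIJ (hf ha)))]
    exact hc _ hf hfk

end Ramsey

lemma monoCliqueC.mono {k N q n m : ℕ} {χ : Finset (Fin N) → Fin q} {c : Fin q}
    (h : monoCliqueC k χ c n) (hmn : m ≤ n) : monoCliqueC k χ c m := by
  obtain ⟨S, hS, hmono⟩ := h
  obtain ⟨T, hTS, hT⟩ := exists_subset_card_eq (hS.ge.trans' hmn)
  exact ⟨T, hT, fun e he => hmono e (he.trans hTS)⟩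

lemma monoCliqueC.of_map {k N N' q n : ℕ} {χ : Finset (Fin N') → Fin q} {c : Fin q}
    (f : Fin N ↪ Fin N') (h : monoCliqueC k (fun e => χ (e.map f)) c n) :
    monoCliqueC k χ c n := by
  obtain ⟨S, hS, hmono⟩ := h
  refine ⟨S.map f, by rw [card_map, hS], fun e he hk => ?_⟩
  obtain ⟨u, hu, rfl⟩ := subset_map_iff.1 he
  exact hmono u hu (by rwa [card_map] at hk)

lemma exists_monoCliqueC_ramseyMulti (k n q : ℕ) (χ : Finset (Fin (ramseyMulti k n q)) → Fin q) :
    ∃ c, monoCliqueC k χ c n := by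
  obtain ⟨N, hN⟩ := hypergraph_ramsey (C := Fin q) k n
  refine Nat.sInf_mem (s := {N | ∀ χ : Finset (Fin N) → Fin q, ∃ c, monoCliqueC k χ c n})
    ⟨N, fun χ => ?_⟩ χ
  obtain ⟨J, -, hJ, c, hc⟩ := hN (univ : Finset (Fin N)) χ (by simp)
  exact ⟨c, J, hJ, hc⟩

lemma lt_ramseyMulti {k n q N : ℕ} (χ : Finset (Fin N) → Fin q)
    (hχ : ∀ c, ¬ monoCliqueC k χ c n) : N < ramseyMulti k n q := by
  by_contra! h
  obtain ⟨c, hc⟩ := exists_monoCliqueC_ramseyMulti k n q fun e => χ (e.map (Fin.castLEEmb h))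
  exact hχ c (hc.of_map _)

lemma card_piFinset_ite_mul {ι β : Type*} [Fintype ι] [DecidableEq ι] [Fintype β] [DecidableEq β]
    (P : Finset ι) (c : β) :
    #(Fintype.piFinset fun i => if i ∈ P then {c} else (univ : Finset β)) * Fintype.card β ^ #P =
      Fintype.card β ^ Fintype.card ι := by
  rw [Fintype.card_piFinset]
  simp only [apply_ite card, card_singleton, card_univ]
  rw [prod_ite, prod_const_one, one_mul, prod_const, ← pow_add, filter_notMem_eq_sdiff,
    ← compl_eq_univ_sdiff, card_compl_add_card]

theorem exists_not_monoCliqueC (k M t q : ℕ) (hq : 0 < q) (h : q * M.choose t < q ^ t.choose k) :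
    ∃ χ : Finset (Fin M) → Fin q, ∀ c, ¬ monoCliqueC k χ c t := by
  classical
  let monoOn : Finset (Fin M) × Fin q → Finset (Finset (Fin M) → Fin q) := fun p =>
    Fintype.piFinset fun e => if e ∈ p.1.powersetCard k then {p.2} else univ
  have hmonoOn : ∀ p ∈ powersetCard t univ ×ˢ univ, #(monoOn p) * q ^ t.choose k = q ^ 2 ^ M := by
    rintro ⟨S, c⟩ hS
    simpa [monoOn, card_powersetCard, mem_powersetCard_univ.1 (mem_product.1 hS).1] using
      card_piFinset_ite_mul (S.powersetCard k) c
  have hcard : #((powersetCard t univ ×ˢ univ).biUnion monoOn) <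
      #(univ : Finset (Finset (Fin M) → Fin q)) := by
    rw [card_univ, Fintype.card_fun, Fintype.card_finset, Fintype.card_fin, Fintype.card_fin]
    refine lt_of_mul_lt_mul_right (a := q ^ t.choose k) ?_ (Nat.zero_le _)
    calc _ ≤ ∑ p ∈ powersetCard t univ ×ˢ univ, #(monoOn p) * q ^ t.choose k := by
          rw [← sum_mul]; exact Nat.mul_le_mul_right _ card_biUnion_le
      _ = M.choose t * q * q ^ 2 ^ M := by
          simp only [sum_congr rfl hmonoOn, sum_const, card_product, card_powersetCard, card_univ,
            Fintype.card_fin, smul_eq_mul]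
      _ < q ^ 2 ^ M * q ^ t.choose k := by
          rw [mul_comm (q ^ 2 ^ M), mul_comm (M.choose t)]
          exact Nat.mul_lt_mul_of_pos_right h (by positivity)
  obtain ⟨χ, -, hχ⟩ := exists_mem_notMem_of_card_lt_card hcard
  refine ⟨χ, fun c ⟨S, hS, hmono⟩ => hχ (mem_biUnion.2 ⟨(S, c), by simp [hS], ?_⟩)⟩
  refine Fintype.mem_piFinset.2 fun e => ?_
  split_ifs with he
  · exact mem_singleton.2 (hmono e (mem_powersetCard.1 he).1 (mem_powersetCard.1 he).2)
  · exact mem_univ _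

lemma two_mul_choose_two_pow_lt {m : ℕ} (hm : 0 < m) :
    2 * (2 ^ m).choose (2 * m + 2) < 2 ^ (2 * m + 2).choose 2 := by
  have hchoose : (2 * m + 2).choose 2 = (m + 1) * (2 * m + 1) := by
    rw [Nat.choose_two_right, show 2 * m + 2 - 1 = 2 * m + 1 by omega,
      show (2 * m + 2) * (2 * m + 1) = 2 * ((m + 1) * (2 * m + 1)) by ring,
      Nat.mul_div_cancel_left _ two_pos]
  calc 2 * (2 ^ m).choose (2 * m + 2) ≤ 2 * (2 ^ m) ^ (2 * m + 2) :=
        Nat.mul_le_mul_left 2 (Nat.choose_le_pow _ _)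
    _ = 2 ^ (m * (2 * m + 2) + 1) := by rw [← pow_mul, pow_succ, mul_comm]
    _ < 2 ^ (2 * m + 2).choose 2 := Nat.pow_lt_pow_right one_lt_two (by rw [hchoose]; nlinarith)

def topDiffBit (a b : ℕ) : ℕ := (a ^^^ b).log2

lemma topDiffBit_comm (a b : ℕ) : topDiffBit a b = topDiffBit b a := by
  rw [topDiffBit, topDiffBit, Nat.xor_comm]

lemma Nat.log2_xor_le_max (x y : ℕ) : (x ^^^ y).log2 ≤ max x.log2 y.log2 := by
  rcases eq_or_ne (x ^^^ y) 0 with h | h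
  · simp [h]
  have hpow (z : ℕ) (hz : z.log2 ≤ max x.log2 y.log2) : z < 2 ^ (max x.log2 y.log2 + 1) :=
    Nat.lt_log2_self.trans_le (Nat.pow_le_pow_right two_pos (by omega))
  exact Nat.lt_succ_iff.1 <| (Nat.log2_lt h).2 <|
    Nat.xor_lt_two_pow (hpow x (le_max_left _ _)) (hpow y (le_max_right _ _))

lemma topDiffBit_le_max (a b c : ℕ) :
    topDiffBit a c ≤ max (topDiffBit a b) (topDiffBit b c) := by
  have : a ^^^ c = (a ^^^ b) ^^^ (b ^^^ c) := by
    rw [Nat.xor_assoc, ← Nat.xor_assoc b, Nat.xor_self, Nat.zero_xor]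
  rw [topDiffBit, this]
  exact Nat.log2_xor_le_max _ _

lemma testBit_topDiffBit {a b : ℕ} (h : a < b) :
    a.testBit (topDiffBit a b) = false ∧ b.testBit (topDiffBit a b) = true := by
  have htop : (a ^^^ b).testBit (topDiffBit a b) = true :=
    Nat.testBit_log2 fun h0 => h.ne (Nat.eq_of_xor_eq_zero h0)
  have hagree (j : ℕ) (hj : topDiffBit a b < j) : a.testBit j = b.testBit j := by
    have : (a ^^^ b).testBit j = false :=
      Nat.testBit_eq_false_of_lt (Nat.lt_log2_self.trans_le (Nat.pow_le_pow_right two_pos hj))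
    simpa [Nat.testBit_xor] using this
  rw [Nat.testBit_xor] at htop
  cases ha : a.testBit (topDiffBit a b) <;> cases hb : b.testBit (topDiffBit a b) <;>
    simp [ha, hb] at htop ⊢
  exact h.not_gt (Nat.lt_of_testBit _ hb ha fun j hj => (hagree j hj).symm)

lemma topDiffBit_ne {a b c : ℕ} (hab : a < b) (hbc : b < c) :
    topDiffBit a b ≠ topDiffBit b c := fun h => by
  have := (testBit_topDiffBit hab).2
  rw [h, (testBit_topDiffBit hbc).1] at this
  exact Bool.false_ne_true this

lemma topDiffBit_eq_max {a b c : ℕ} (hab : a < b) (hbc : b < c) :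
    topDiffBit a c = max (topDiffBit a b) (topDiffBit b c) := by
  have := topDiffBit_ne hab hbc
  have h₁ := topDiffBit_le_max a b c
  have h₂ := topDiffBit_le_max a c b
  have h₃ := topDiffBit_le_max b a c
  rw [topDiffBit_comm c b] at h₂
  rw [topDiffBit_comm b a] at h₃
  omega

lemma topDiffBit_lt {a b M : ℕ} (ha : a < 2 ^ M) (hb : b < 2 ^ M) (hab : a ≠ b) :
    topDiffBit a b < M :=
  (Nat.log2_lt fun h => hab (Nat.eq_of_xor_eq_zero h)).2 (Nat.xor_lt_two_pow ha hb)

noncomputable def finPair (M a b : ℕ) : Finset (Fin M) :=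
  ({a, b} : Finset ℕ).preimage Fin.val Fin.val_injective.injOn

section SteppingUp

variable {M q : ℕ}

lemma finPair_comm (a b : ℕ) : finPair M a b = finPair M b a := by
  simp only [finPair, pair_comm]

noncomputable def stepUpColor (χ : Finset (Fin M) → Fin q) (x y z : ℕ) : Fin (2 * q) :=
  finProdFinEquiv (if topDiffBit x y < topDiffBit y z then 0 else 1,
    χ (finPair M (topDiffBit x y) (topDiffBit y z)))

noncomputable def stepUp (χ : Finset (Fin M) → Fin q) (e : Finset (Fin (2 ^ M))) : Fin (2 * q) :=
  if h : #e = 3 then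
    stepUpColor χ (e.orderEmbOfFin h 0) (e.orderEmbOfFin h 1) (e.orderEmbOfFin h 2)
  else finProdFinEquiv (0, χ ∅)

lemma stepUp_triple {χ : Finset (Fin M) → Fin q} {x y z : Fin (2 ^ M)} (hxy : x < y)
    (hyz : y < z) : stepUp χ {x, y, z} = stepUpColor χ x y z := by
  have h : #({x, y, z} : Finset (Fin (2 ^ M))) = 3 :=
    card_eq_three.2 ⟨x, y, z, hxy.ne, (hxy.trans hyz).ne, hyz.ne, rfl⟩
  have hsort := orderEmbOfFin_unique h (f := ![x, y, z]) (fun i => by fin_cases i <;> simp)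
    (Fin.strictMono_iff_lt_succ.2 fun i => by fin_cases i <;> assumption)
  rw [stepUp, dif_pos h, ← hsort]
  rfl

lemma stepUpColor_eq_iff {χ : Finset (Fin M) → Fin q} {x y z : ℕ} {o : Fin 2} {c : Fin q} :
    stepUpColor χ x y z = finProdFinEquiv (o, c) ↔
      (topDiffBit x y < topDiffBit y z ↔ o = 0) ∧
        χ (finPair M (topDiffBit x y) (topDiffBit y z)) = c := by
  rw [stepUpColor, finProdFinEquiv.apply_eq_iff_eq, Prod.mk.injEq]
  fin_cases o <;> split_ifs <;> simp_all

lemma stepUpColor_eq_of_subset {χ : Finset (Fin M) → Fin q} {S : Finset (Fin (2 ^ M))}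
    {c : Fin (2 * q)} (hmono : ∀ e ⊆ S, #e = 3 → stepUp χ e = c) {x y z : Fin (2 ^ M)}
    (hx : x ∈ S) (hy : y ∈ S) (hz : z ∈ S) (hxy : x < y) (hyz : y < z) :
    stepUpColor χ x y z = c := by
  rw [← stepUp_triple hxy hyz]
  exact hmono _ (insert_subset hx (insert_subset hy (singleton_subset_iff.2 hz)))
    (card_eq_three.2 ⟨x, y, z, hxy.ne, (hxy.trans hyz).ne, hyz.ne, rfl⟩)

lemma monoCliqueC_two_of_labelling {β : Type*} [LinearOrder β] {χ : Finset (Fin M) → Fin q}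
    {c : Fin q} {T : Finset β} {f : β → ℕ} (hfM : ∀ y ∈ T, f y < M)
    (hf : ∀ y ∈ T, ∀ z ∈ T, y < z → f y ≠ f z ∧ χ (finPair M (f y) (f z)) = c) :
    monoCliqueC 2 χ c #T := by
  classical
  have hinj : Set.InjOn f T := fun y hy z hz hyz => by
    by_contra hne
    rcases lt_or_gt_of_ne hne with h | h
    exacts [(hf y hy z hz h).1 hyz, (hf z hz y hy h).1 hyz.symm]
  refine ⟨(T.image f).preimage Fin.val Fin.val_injective.injOn, ?_, fun e he he2 => ?_⟩
  · rw [← card_image_of_injOn hinj, ← card_map Fin.valEmbedding]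
    congr 1
    ext d
    simp only [Finset.mem_map, mem_preimage, Fin.valEmbedding_apply, mem_image]
    exact ⟨fun ⟨i, hi, hid⟩ => hid ▸ hi,
      fun ⟨y, hy, hyd⟩ => ⟨⟨d, hyd ▸ hfM y hy⟩, ⟨y, hy, hyd⟩, rfl⟩⟩
  · obtain ⟨i, j, hij, rfl⟩ := card_eq_two.1 he2
    obtain ⟨y, hy, hyi⟩ := mem_image.1 (mem_preimage.1 (he (mem_insert_self i {j})))
    obtain ⟨z, hz, hzj⟩ :=
      mem_image.1 (mem_preimage.1 (he (mem_insert_of_mem (mem_singleton_self j))))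
    have hpair : ({i, j} : Finset (Fin M)) = finPair M (f y) (f z) := by
      ext; simp [finPair, hyi, hzj, Fin.val_inj]
    have hyz : y ≠ z := by rintro rfl; exact hij (Fin.ext (hyi.symm.trans hzj))
    rcases hyz.lt_or_gt with h | h
    · rw [hpair]; exact (hf y hy z hz h).2
    · rw [hpair, finPair_comm]; exact (hf z hz y hy h).2

theorem stepUp_not_monoCliqueC {n : ℕ} {χ : Finset (Fin M) → Fin q}
    (hχ : ∀ c, ¬ monoCliqueC 2 χ c n) (c : Fin (2 * q)) :
    ¬ monoCliqueC 3 (stepUp χ) c (n + 1) := by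
  rintro ⟨S, hS, hmono⟩
  obtain ⟨⟨o, c'⟩, rfl⟩ := finProdFinEquiv.surjective c
  have htriple : ∀ x ∈ S, ∀ y ∈ S, ∀ z ∈ S, x < y → y < z →
      (topDiffBit x y < topDiffBit y z ↔ o = 0) ∧
        χ (finPair M (topDiffBit x y) (topDiffBit y z)) = c' := fun x hx y hy z hz hxy hyz =>
    stepUpColor_eq_iff.1 (stepUpColor_eq_of_subset hmono hx hy hz hxy hyz)
  have hlt : ∀ x y : Fin (2 ^ M), x ≠ y → topDiffBit x y < M := fun x y hxy =>
    topDiffBit_lt x.isLt y.isLt (Fin.val_ne_of_ne hxy)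
  have hS₀ : S.Nonempty := card_pos.1 (by omega)
  have hcard : ∀ p ∈ S, n = #(S.erase p) := fun p hp => by
    rw [card_erase_of_mem hp, hS, Nat.add_sub_cancel]
  by_cases ho : o = 0
  · set a := S.min' hS₀
    have ha : ∀ y ∈ S.erase a, a < y := fun y hy => min'_lt_of_mem_erase_min' _ _ hy
    refine hχ c' (hcard a (min'_mem S hS₀) ▸ monoCliqueC_two_of_labelling
      (f := fun y => topDiffBit a y) (fun y hy => hlt a y (ha y hy).ne) ?_)
    intro y hy z hz hyz
    obtain ⟨hinc, hcol⟩ := htriple a (min'_mem S hS₀) y (mem_of_mem_erase hy) z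
      (mem_of_mem_erase hz) (ha y hy) hyz
    have hmax : topDiffBit a z = topDiffBit y z := by
      rw [topDiffBit_eq_max (ha y hy) hyz, max_eq_right (hinc.2 ho).le]
    exact ⟨hmax ▸ (hinc.2 ho).ne, hmax ▸ hcol⟩
  · set b := S.max' hS₀
    have hb : ∀ y ∈ S.erase b, y < b := fun y hy => lt_max'_of_mem_erase_max' _ _ hy
    refine hχ c' (hcard b (max'_mem S hS₀) ▸ monoCliqueC_two_of_labelling
      (f := fun y => topDiffBit y b) (fun y hy => hlt y b (hb y hy).ne) ?_)
    intro x hx y hy hxy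
    obtain ⟨hinc, hcol⟩ := htriple x (mem_of_mem_erase hx) y (mem_of_mem_erase hy) b
      (max'_mem S hS₀) hxy (hb y hy)
    have hdown : topDiffBit y b < topDiffBit x y :=
      (topDiffBit_ne hxy (hb y hy)).symm.lt_of_le (not_lt.1 fun h => ho (hinc.1 h))
    have hmax : topDiffBit x b = topDiffBit x y := by
      rw [topDiffBit_eq_max hxy (hb y hy), max_eq_left hdown.le]
    exact ⟨hmax ▸ hdown.ne', hmax ▸ hcol⟩

end SteppingUp

theorem stmt_11 :
    ∃ c : ℝ, 0 < c ∧ ∀ᶠ n : ℕ in atTop,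
      (2:ℝ) ^ ((2:ℝ) ^ (c * n)) < (ramseyMulti 3 n 4 : ℝ) := by
  refine ⟨1 / 4, by norm_num, eventually_atTop.2 ⟨8, fun n hn => ?_⟩⟩
  obtain ⟨n', rfl⟩ : ∃ n', n = n' + 1 := ⟨n - 1, by omega⟩
  set m := (n' - 2) / 2
  obtain ⟨χ, hχ⟩ := exists_not_monoCliqueC 2 (2 ^ m) (2 * m + 2) 2 two_pos
    (two_mul_choose_two_pow_lt (by omega))
  have hlt : 2 ^ 2 ^ m < ramseyMulti 3 (n' + 1) 4 :=
    lt_ramseyMulti (stepUp χ) (stepUp_not_monoCliqueC fun c h => hχ c (h.mono (by omega)))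
  have hm : 1 / 4 * ((n' + 1 : ℕ) : ℝ) ≤ m := by
    have : ((n' + 1 : ℕ) : ℝ) ≤ 4 * m := by exact_mod_cast (by omega : n' + 1 ≤ 4 * m)
    linarith
  calc (2:ℝ) ^ ((2:ℝ) ^ (1 / 4 * ((n' + 1 : ℕ) : ℝ))) ≤ 2 ^ ((2:ℝ) ^ (m : ℝ)) := by
        gcongr <;> norm_num
    _ = ((2 ^ 2 ^ m : ℕ) : ℝ) := by
        rw [Real.rpow_natCast, ← Nat.cast_ofNat, ← Nat.cast_pow, Real.rpow_natCast, Nat.cast_pow]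
    _ < _ := by exact_mod_cast hlt
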